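/- Let ρ₁,…,ρₙ be positive definite density matrices, p a probability vector, and suppose σ is a positive definite density matrix satisfying the fixed point equation f(σ)·σ = Σᵢ pᵢ √(σ^{1/2} ρᵢ σ^{1/2}), where f(σ) = Σᵢ pᵢ F(ρᵢ,σ). Then f(σ)² ≤ Σ_{i,j} pᵢ pⱼ F(ρᵢ, ρⱼ). -/

import Mathlib

open Matrix BigOperators Finset ComplexOrder

variable {d n : ℕ}

open Classical in
/-- The positive semidefinite square root (zero if not PSD). -/
noncomputable def psqrt (A : Matrix (Fin d) (Fin d) ℂ) : Matrix (Fin d) (Fin d) ℂ :=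
  if h : A.PosSemidef then
    (h.1.eigenvectorUnitary : Matrix (Fin d) (Fin d) ℂ) *
      diagonal (fun i => ((Real.sqrt (h.1.eigenvalues i) : ℝ) : ℂ)) *
      (star h.1.eigenvectorUnitary : Matrix (Fin d) (Fin d) ℂ)
  else 0

/-- Trace norm ‖A‖₁ = Tr √(A*A). -/
noncomputable def traceNorm (A : Matrix (Fin d) (Fin d) ℂ) : ℝ :=
  ((psqrt (Aᴴ * A)).trace).re

/-- Fidelity F(ρ,σ) = Tr √(σ^{1/2} ρ σ^{1/2}). -/
noncomputable def fid (ρ σ : Matrix (Fin d) (Fin d) ℂ) : ℝ :=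
  ((psqrt (psqrt σ * ρ * psqrt σ)).trace).re

/-- Density matrix: positive semidefinite with unit trace. -/
def IsDensity (ρ : Matrix (Fin d) (Fin d) ℂ) : Prop := ρ.PosSemidef ∧ ρ.trace = 1

/-- Contraction: spectral norm at most one, i.e. 1 - UᴴU ⪰ 0. -/
def IsContraction (U : Matrix (Fin d) (Fin d) ℂ) : Prop := (1 - Uᴴ * U).PosSemidef

/-- Probability vector. -/
def IsProbVec (p : Fin n → ℝ) : Prop := (∀ i, 0 ≤ p i) ∧ ∑ i, p i = 1

/-!
Put `Mᵢ = σ^{-1/2} √(σ^{1/2} ρᵢ σ^{1/2})`. Then `Mᵢ Mᵢᴴ = ρᵢ`, so `Mᵢ = ρᵢ^{1/2} Uᵢ` with `Uᵢ`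
unitary. Multiplying the fixed point equation on the left by `σ^{-1/2}` gives
`∑ pᵢ Mᵢ = f σ^{1/2}`, hence `f² = f² Tr σ = Re Tr ((∑ pᵢ Mᵢ)(∑ pⱼ Mⱼ)ᴴ) = ∑ pᵢ pⱼ Re Tr (Mᵢ Mⱼᴴ)`.
Up to complex conjugation, each `Tr (Mᵢ Mⱼᴴ)` is `Tr (ρᵢ^{1/2} ρⱼ^{1/2} W)` with `W` unitary, and by
the polar decomposition its real part is at most `‖ρᵢ^{1/2} ρⱼ^{1/2}‖₁ = F(ρᵢ, ρⱼ)`.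
-/

section Unitary

variable {m : Type*} [Fintype m]

lemma re_trace_sum_smul_mul_conjTranspose_le {ι : Type*} [Fintype ι] {p : ι → ℝ}
    (hp : ∀ i, 0 ≤ p i) {M : ι → Matrix m m ℂ} {c : ι → ι → ℝ}
    (hc : ∀ i j, (M i * (M j)ᴴ).trace.re ≤ c i j) :
    ((∑ i, (p i : ℂ) • M i) * (∑ i, (p i : ℂ) • M i)ᴴ).trace.re ≤
      ∑ i, ∑ j, p i * p j * c i j := by
  rw [conjTranspose_sum, sum_mul_sum]
  simp only [conjTranspose_smul, Complex.star_def, Complex.conj_ofReal, Matrix.smul_mul,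
    Matrix.mul_smul, smul_smul, trace_sum, trace_smul, Complex.re_sum, smul_eq_mul,
    ← Complex.ofReal_mul, Complex.re_ofReal_mul]
  refine sum_le_sum fun i _ => sum_le_sum fun j _ => ?_
  rw [mul_comm (p j)]
  exact mul_le_mul_of_nonneg_left (hc i j) (mul_nonneg (hp i) (hp j))

variable [DecidableEq m]

/-- Expanding `0 ≤ Tr ((1 - U) P (1 - U)ᴴ)` gives `2 Re Tr (U P) ≤ Tr P + Tr (U P Uᴴ) = 2 Tr P`. -/
lemma re_trace_unitary_mul_le {P U : Matrix m m ℂ} (hP : P.PosSemidef)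
    (hU : U ∈ unitaryGroup m ℂ) : (U * P).trace.re ≤ P.trace.re := by
  have hUU : Uᴴ * U = 1 := mem_unitaryGroup_iff'.1 hU
  have hsq : 0 ≤ ((1 - U) * P * (1 - U)ᴴ).trace.re :=
    (Complex.nonneg_iff.1 (hP.mul_mul_conjTranspose_same _).trace_nonneg).1
  have hexp : (1 - U) * P * (1 - U)ᴴ = P - U * P - (U * P)ᴴ + U * P * Uᴴ := by
    rw [conjTranspose_sub, conjTranspose_one, conjTranspose_mul, hP.isHermitian.eq]
    noncomm_ring
  have hcyc : (U * P * Uᴴ).trace = P.trace := by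
    rw [trace_mul_cycle, hUU, Matrix.one_mul]
  rw [hexp, trace_add, trace_sub, trace_sub, hcyc, trace_conjTranspose] at hsq
  simp only [Complex.add_re, Complex.sub_re, Complex.star_def, Complex.conj_re] at hsq
  linarith

lemma exists_mem_unitaryGroup_eq_mul {M r : Matrix m m ℂ} (hr : r.IsHermitian)
    (hdet : IsUnit r.det) (h : M * Mᴴ = r * r) : ∃ U ∈ unitaryGroup m ℂ, M = r * U := by
  refine ⟨r⁻¹ * M, mem_unitaryGroup_iff.2 ?_, (mul_nonsing_inv_cancel_left r M hdet).symm⟩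
  rw [star_eq_conjTranspose, conjTranspose_mul, conjTranspose_nonsing_inv, hr.eq,
    Matrix.mul_assoc, ← Matrix.mul_assoc M, h, Matrix.mul_assoc, mul_nonsing_inv _ hdet,
    Matrix.mul_one, nonsing_inv_mul _ hdet]

end Unitary

section Fidelity

variable {A B W ρ τ σ M N : Matrix (Fin d) (Fin d) ℂ}

lemma psqrt_posSemidef (h : A.PosSemidef) : (psqrt A).PosSemidef := by
  rw [psqrt, dif_pos h]
  exact (posSemidef_diagonal_iff.2 fun i => by simp [Real.sqrt_nonneg]).mul_mul_conjTranspose_same _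

lemma psqrt_mul_self (h : A.PosSemidef) : psqrt A * psqrt A = A := by
  rw [psqrt, dif_pos h]
  set U : Matrix (Fin d) (Fin d) ℂ := ↑h.1.eigenvectorUnitary
  have hU : star U * U = 1 := mem_unitaryGroup_iff'.mp h.1.eigenvectorUnitary.2
  have hD : diagonal (fun i => ((Real.sqrt (h.1.eigenvalues i) : ℝ) : ℂ)) *
      diagonal (fun i => ((Real.sqrt (h.1.eigenvalues i) : ℝ) : ℂ)) =
      diagonal (RCLike.ofReal ∘ h.1.eigenvalues) := by
    rw [diagonal_mul_diagonal]
    congr 1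
    funext i
    rw [← Complex.ofReal_mul, Real.mul_self_sqrt (h.eigenvalues_nonneg i)]
    rfl
  conv_rhs => rw [h.1.spectral_theorem]
  calc _ = U * (diagonal (fun i => ((Real.sqrt (h.1.eigenvalues i) : ℝ) : ℂ)) * (star U * U) *
        diagonal (fun i => ((Real.sqrt (h.1.eigenvalues i) : ℝ) : ℂ))) * star U := by
        simp only [Matrix.mul_assoc]
    _ = _ := by rw [hU, Matrix.mul_one, hD]; rfl

lemma isUnit_det_psqrt (h : A.PosSemidef) (hA : IsUnit A.det) : IsUnit (psqrt A).det := by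
  rwa [← isUnit_mul_self_iff, ← det_mul, psqrt_mul_self h]

lemma isUnit_det_psqrt_of_posDef (h : A.PosDef) : IsUnit (psqrt A).det :=
  isUnit_det_psqrt h.posSemidef ((isUnit_iff_isUnit_det A).1 h.isUnit)

lemma traceNorm_psqrt_mul_psqrt (hρ : ρ.PosSemidef) (hτ : τ.PosSemidef) :
    traceNorm (psqrt ρ * psqrt τ) = fid ρ τ := by
  rw [traceNorm, fid, conjTranspose_mul, (psqrt_posSemidef hρ).isHermitian.eq,
    (psqrt_posSemidef hτ).isHermitian.eq, Matrix.mul_assoc, ← Matrix.mul_assoc (psqrt ρ),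
    psqrt_mul_self hρ, ← Matrix.mul_assoc]

/-- Polar decomposition `Bᴴ = |B| U` turns `Tr (B W)` into `Tr (W Uᴴ |B|)`. -/
lemma re_trace_mul_unitary_le_traceNorm (hB : IsUnit B.det) (hW : W ∈ unitaryGroup (Fin d) ℂ) :
    (B * W).trace.re ≤ traceNorm B := by
  have hBB : (Bᴴ * B).PosSemidef := posSemidef_conjTranspose_mul_self B
  have hdet : IsUnit (Bᴴ * B).det := by
    rw [det_mul, det_conjTranspose]
    exact (hB.map (starRingEnd ℂ)).mul hB
  have hP : (psqrt (Bᴴ * B)).PosSemidef := psqrt_posSemidef hBB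
  obtain ⟨U, hU, hBU⟩ := exists_mem_unitaryGroup_eq_mul hP.isHermitian
    (isUnit_det_psqrt hBB hdet) (by rw [conjTranspose_conjTranspose, psqrt_mul_self hBB])
  have hB' : B = star U * psqrt (Bᴴ * B) := by
    rw [← hP.isHermitian.eq, star_eq_conjTranspose, ← conjTranspose_mul, ← hBU,
      conjTranspose_conjTranspose]
  have hcyc : (B * W).trace = (W * star U * psqrt (Bᴴ * B)).trace := by
    conv_lhs => rw [hB']
    rw [trace_mul_cycle, Matrix.mul_assoc]
  rw [hcyc, traceNorm]
  exact re_trace_unitary_mul_le hP (mul_mem hW (Unitary.star_mem hU))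

lemma re_trace_mul_conjTranspose_le_fid (hρ : ρ.PosDef) (hτ : τ.PosDef) (hM : M * Mᴴ = ρ)
    (hN : N * Nᴴ = τ) : (M * Nᴴ).trace.re ≤ fid ρ τ := by
  have hr := psqrt_posSemidef hρ.posSemidef
  have ht := psqrt_posSemidef hτ.posSemidef
  have hrdet := isUnit_det_psqrt_of_posDef hρ
  have htdet := isUnit_det_psqrt_of_posDef hτ
  obtain ⟨U, hU, rfl⟩ := exists_mem_unitaryGroup_eq_mul hr.isHermitian hrdet
    (by rw [hM, psqrt_mul_self hρ.posSemidef])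
  obtain ⟨V, hV, rfl⟩ := exists_mem_unitaryGroup_eq_mul ht.isHermitian htdet
    (by rw [hN, psqrt_mul_self hτ.posSemidef])
  have hcyc : (psqrt ρ * U * (psqrt τ * V)ᴴ).trace =
      star (psqrt ρ * psqrt τ * (V * star U)).trace := by
    rw [← trace_conjTranspose]
    simp only [conjTranspose_mul, hr.isHermitian.eq, ht.isHermitian.eq, star_eq_conjTranspose,
      conjTranspose_conjTranspose, Matrix.mul_assoc]
    rw [trace_mul_comm (psqrt ρ)]
    simp only [Matrix.mul_assoc]
  rw [hcyc, Complex.star_def, Complex.conj_re,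
    ← traceNorm_psqrt_mul_psqrt hρ.posSemidef hτ.posSemidef]
  refine re_trace_mul_unitary_le_traceNorm ?_ (mul_mem hV (Unitary.star_mem hU))
  rw [det_mul]
  exact hrdet.mul htdet

lemma inv_psqrt_mul_psqrt_conj_mul_conjTranspose (hσ : σ.PosDef) (hρ : ρ.PosSemidef) :
    (psqrt σ)⁻¹ * psqrt (psqrt σ * ρ * psqrt σ) *
      ((psqrt σ)⁻¹ * psqrt (psqrt σ * ρ * psqrt σ))ᴴ = ρ := by
  have hs := psqrt_posSemidef hσ.posSemidef
  have hsdet := isUnit_det_psqrt_of_posDef hσ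
  have hconj : (psqrt σ * ρ * psqrt σ).PosSemidef := by
    simpa only [hs.isHermitian.eq] using hρ.mul_mul_conjTranspose_same (psqrt σ)
  rw [conjTranspose_mul, (psqrt_posSemidef hconj).isHermitian.eq, conjTranspose_nonsing_inv,
    hs.isHermitian.eq, Matrix.mul_assoc, ← Matrix.mul_assoc (psqrt _), psqrt_mul_self hconj,
    Matrix.mul_assoc, Matrix.mul_assoc, mul_nonsing_inv _ hsdet, Matrix.mul_one,
    nonsing_inv_mul_cancel_left _ _ hsdet]

end Fidelity

/-- A fixed point of the average-fidelity fixed point equation satisfies the Product bound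
with its own average fidelity squared. -/
theorem fixed_point_product_bound (ρ : Fin n → Matrix (Fin d) (Fin d) ℂ) (p : Fin n → ℝ)
    (σ : Matrix (Fin d) (Fin d) ℂ)
    (hρ : ∀ i, (ρ i).PosDef ∧ (ρ i).trace = 1) (hp : IsProbVec p)
    (hσ : σ.PosDef) (hσ1 : σ.trace = 1)
    (hfix : ((∑ i, p i * fid (ρ i) σ : ℝ) : ℂ) • σ =
      ∑ i, (p i : ℂ) • psqrt (psqrt σ * ρ i * psqrt σ)) :
    (∑ i, p i * fid (ρ i) σ) ^ 2 ≤ ∑ i, ∑ j, p i * p j * fid (ρ i) (ρ j) := by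
  have hs := psqrt_posSemidef hσ.posSemidef
  have hsdet := isUnit_det_psqrt_of_posDef hσ
  have hss := psqrt_mul_self hσ.posSemidef
  set s := psqrt σ
  set f := ∑ i, p i * fid (ρ i) σ
  set M := fun i => s⁻¹ * psqrt (s * ρ i * s)
  have hsum : ∑ i, (p i : ℂ) • M i = (f : ℂ) • s := by
    simp only [M, ← Matrix.mul_smul, ← Matrix.mul_sum, ← hfix]
    rw [← hss, Matrix.mul_smul, nonsing_inv_mul_cancel_left _ _ hsdet]
  have hf : (((f : ℂ) • s) * ((f : ℂ) • s)ᴴ).trace.re = f ^ 2 := by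
    rw [conjTranspose_smul, hs.isHermitian.eq, Complex.star_def, Complex.conj_ofReal,
      smul_mul_smul_comm, hss, trace_smul, hσ1, smul_eq_mul, mul_one,
      ← Complex.ofReal_mul, Complex.ofReal_re, sq]
  rw [← hf, ← hsum]
  exact re_trace_sum_smul_mul_conjTranspose_le hp.1 fun i j =>
    re_trace_mul_conjTranspose_le_fid (hρ i).1 (hρ j).1
      (inv_psqrt_mul_psqrt_conj_mul_conjTranspose hσ (hρ i).1.posSemidef)
      (inv_psqrt_mul_psqrt_conj_mul_conjTranspose hσ (hρ j).1.posSemidef)
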